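/- Dual-schedule reversibility by strong induction: let ε : ℝ × ℕ → ℝ be any function, and for n = 0,…,N define primary inversion latents p̄_{n+1} = A_n·p̄_n + B_n·ε(ā_n, τ_n) and auxiliary inversion latents ā_{n+1} = C_n·ā_n + D_n·ε(p̄_{n+1}, σ_n), with sampling latents defined by p̃_n = A_n⁻¹·(p̃_{n+1} − B_n·ε(ã_n, τ_n)) and ã_n = C_n⁻¹·(ã_{n+1} − D_n·ε(p̃_{n+1}, σ_n)), where all A_n, C_n ≠ 0. If p̃_{N} = p̄_{N} and ã_{N} = ā_{N} at the top of the schedules, then p̃_n = p̄_n and ã_n = ā_n for all n ≤ N; in particular p̃_0 = p̄_0 (perfect reconstruction). -/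

import Mathlib

/-!
Once the sampling latents agree with the inversion latents at level `n + 1`, the auxiliary sampling
step evaluates `ε` at the same point `(p̄_{n+1}, σ_n)` as the auxiliary inversion step, so it undoes
it exactly; then the primary sampling step sees `ε (ā_n, τ_n)` and undoes the primary inversion step.
Descending induction from `N` gives agreement at every level.
-/

theorem inv_mul_sub_eq_of_eq_mul_add {K : Type*} [DivisionRing K] {a b x y : K} (ha : a ≠ 0)
    (h : y = a * x + b) : a⁻¹ * (y - b) = x := by
  rw [h, add_sub_cancel_right, inv_mul_cancel_left₀ ha]

theorem dual_schedule_perfect_reconstruction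
    (N : ℕ) (A B C D : ℕ → ℝ) (τ σ : ℕ → ℕ) (ε : ℝ → ℕ → ℝ)
    (pbar abar ptil atil : ℕ → ℝ)
    (hA : ∀ n, A n ≠ 0) (hC : ∀ n, C n ≠ 0)
    (hpbar : ∀ n, pbar (n + 1) = A n * pbar n + B n * ε (abar n) (τ n))
    (habar : ∀ n, abar (n + 1) = C n * abar n + D n * ε (pbar (n + 1)) (σ n))
    (hptil : ∀ n, ptil n = (A n)⁻¹ * (ptil (n + 1) - B n * ε (atil n) (τ n)))
    (hatil : ∀ n, atil n = (C n)⁻¹ * (atil (n + 1) - D n * ε (ptil (n + 1)) (σ n)))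
    (hpN : ptil N = pbar N) (haN : atil N = abar N) :
    (∀ n ≤ N, ptil n = pbar n ∧ atil n = abar n) ∧ (ptil 0 = pbar 0) := by
  have step (n : ℕ) (hp : ptil (n + 1) = pbar (n + 1)) (ha : atil (n + 1) = abar (n + 1)) :
      ptil n = pbar n ∧ atil n = abar n := by
    have ha' : atil n = abar n := by
      rw [hatil n, ha, hp]
      exact inv_mul_sub_eq_of_eq_mul_add (hC n) (habar n)
    refine ⟨?_, ha'⟩
    rw [hptil n, hp, ha']
    exact inv_mul_sub_eq_of_eq_mul_add (hA n) (hpbar n)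
  have agree (n : ℕ) (hn : n ≤ N) : ptil n = pbar n ∧ atil n = abar n :=
    Nat.decreasingInduction (fun k _ ⟨hp, ha⟩ => step k hp ha) ⟨hpN, haN⟩ hn
  exact ⟨agree, (agree 0 N.zero_le).1⟩
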